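/- Let d ≡ 1 (mod 4) be a positive non-square integer, let ω_d = (1+√d)/2, and let ω_d = [a_0; a_1, a_2, …] be its simple continued fraction expansion, with n-th convergent p_n/q_n (with the convention q_{−1} = 0) and n-th total quotient α_n = [a_n; a_{n+1}, …]. Set ν_n = |p_n² − p_n·q_n − q_n²·(d−1)/4|. Then for every n ≥ 0 there is a real number δ_n with α_{n+1} = √d/ν_n − q_{n−1}/q_n + δ_n and |δ_n| < 4/(√d·q_n²); in particular α_{n+1} < √d/ν_n for every n ≥ 0. -/

import Mathlib

/-- The `n`-th total quotient `α_n` of the continued fraction expansion of `θ`: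
`α_0 = θ`, `α_{n+1} = 1/(α_n - ⌊α_n⌋)`. -/
noncomputable def cfAlpha (θ : ℝ) : ℕ → ℝ
  | 0 => θ
  | n + 1 => 1 / Int.fract (cfAlpha θ n)

/-- The `n`-th partial quotient `a_n` of the continued fraction expansion of `θ`. -/
noncomputable def cfA (θ : ℝ) (n : ℕ) : ℤ := ⌊cfAlpha θ n⌋

/-- Numerators of the convergents of `θ`, shifted by two:
`cfP θ (n+2) = p_n`, with `p_{-2} = 0`, `p_{-1} = 1`, `p_n = a_n p_{n-1} + p_{n-2}`. -/
noncomputable def cfP (θ : ℝ) : ℕ → ℤ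
  | 0 => 0
  | 1 => 1
  | n + 2 => cfA θ n * cfP θ (n + 1) + cfP θ n

/-- Denominators of the convergents of `θ`, shifted by two:
`cfQ θ (n+2) = q_n`, with `q_{-2} = 1`, `q_{-1} = 0`, `q_n = a_n q_{n-1} + q_{n-2}`. -/
noncomputable def cfQ (θ : ℝ) : ℕ → ℤ
  | 0 => 1
  | 1 => 0
  | n + 2 => cfA θ n * cfQ θ (n + 1) + cfQ θ n

/-!
Write `E_k = p_k - q_k ω` and `E'_k = p_k - q_k ω'` with `ω' = (1 - √d)/2` the conjugate of `ω`.
The convergent recursion gives `α_{n+1} = -E_{n-1}/E_n`, and the determinant identity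
`p_n q_{n-1} - p_{n-1} q_n = (-1)^{n+1}` splits this as
`(-1)^{n+1} (ω - ω') / (E_n E'_n) - E'_{n-1}/E'_n`.
Here `E_n E'_n = N(p_n - q_n ω)` and `(-1)^{n+1} E_n > 0`, so the first term is `√d/ν_n`.
As `ω' < 0`, the `E'_k` are positive, which gives the inequality; moreover
`E'_{n-1}/E'_n = q_{n-1}/q_n - (-1)^{n+1}/(q_n E'_n)` with `E'_n = E_n + q_n √d > q_n √d - 1`,
which bounds `δ_n`.
-/

namespace ContinuedFraction

noncomputable def cfErr (θ x : ℝ) (k : ℕ) : ℝ := cfP θ k - cfQ θ k * x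

variable {θ : ℝ}

theorem irrational_cfAlpha (hθ : Irrational θ) : ∀ n, Irrational (cfAlpha θ n)
  | 0 => hθ
  | n + 1 => by
    have hf : Irrational (Int.fract (cfAlpha θ n)) := by
      rw [← Int.self_sub_floor]; exact (irrational_cfAlpha hθ n).sub_intCast _
    simpa [cfAlpha, one_div] using hf.inv

theorem fract_cfAlpha_pos (hθ : Irrational θ) (n : ℕ) : 0 < Int.fract (cfAlpha θ n) :=
  (Int.fract_nonneg _).lt_of_ne fun h =>
    (irrational_cfAlpha hθ n).ne_int ⌊cfAlpha θ n⌋ (by linarith [Int.floor_add_fract (cfAlpha θ n)])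

theorem one_lt_cfAlpha_succ (hθ : Irrational θ) (n : ℕ) : 1 < cfAlpha θ (n + 1) :=
  one_lt_one_div (fract_cfAlpha_pos hθ n) (Int.fract_lt_one _)

theorem cfAlpha_succ_mul_sub_cfA (hθ : Irrational θ) (n : ℕ) :
    cfAlpha θ (n + 1) * (cfAlpha θ n - cfA θ n) = 1 := by
  rw [cfA, Int.self_sub_floor, cfAlpha]
  exact one_div_mul_cancel (fract_cfAlpha_pos hθ n).ne'

theorem one_le_cfA_succ (hθ : Irrational θ) (n : ℕ) : 1 ≤ cfA θ (n + 1) := by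
  rw [cfA, Int.le_floor]
  exact_mod_cast (one_lt_cfAlpha_succ hθ n).le

theorem cfP_succ_mul_cfQ_sub (n : ℕ) :
    cfP θ (n + 1) * cfQ θ n - cfP θ n * cfQ θ (n + 1) = (-1) ^ n := by
  induction n with
  | zero => simp [cfP, cfQ]
  | succ n ih =>
    simp only [cfP, cfQ, pow_succ]
    linear_combination (-1 : ℤ) * ih

theorem one_le_cfQ_succ_succ (hθ : Irrational θ) (n : ℕ) :
    1 ≤ cfQ θ (n + 2) ∧ 0 ≤ cfQ θ (n + 1) := by
  induction n with
  | zero => simp [cfQ]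
  | succ n ih =>
    have ha := one_le_cfA_succ hθ n
    refine ⟨?_, by linarith [ih.1]⟩
    show 1 ≤ cfA θ (n + 1) * cfQ θ (n + 2) + cfQ θ (n + 1)
    nlinarith [ih.1, ih.2]

theorem one_le_cfP_succ (hθ : Irrational θ) (hθ1 : 1 ≤ θ) (n : ℕ) : 1 ≤ cfP θ (n + 1) := by
  have ha : ∀ k, 1 ≤ cfA θ k
    | 0 => by rw [cfA, Int.le_floor]; exact_mod_cast hθ1
    | k + 1 => one_le_cfA_succ hθ k
  suffices ∀ n, 1 ≤ cfP θ (n + 1) ∧ 0 ≤ cfP θ n from (this n).1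
  intro n
  induction n with
  | zero => simp [cfP]
  | succ n ih =>
    refine ⟨?_, by linarith [ih.1]⟩
    show 1 ≤ cfA θ n * cfP θ (n + 1) + cfP θ n
    nlinarith [ih.1, ih.2, ha n]

/-- The relation `θ = (α_n p_{n-1} + p_{n-2}) / (α_n q_{n-1} + q_{n-2})`, in shifted indices. -/
theorem cfAlpha_mul_cfErr_succ_add (hθ : Irrational θ) (n : ℕ) :
    cfAlpha θ n * cfErr θ θ (n + 1) + cfErr θ θ n = 0 := by
  induction n with
  | zero => simp [cfAlpha, cfErr, cfP, cfQ]
  | succ n ih =>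
    have hrel := cfAlpha_succ_mul_sub_cfA hθ n
    simp only [cfErr, cfP, cfQ] at ih ⊢
    push_cast
    linear_combination cfAlpha θ (n + 1) * ih - ((cfP θ (n + 1) : ℝ) - cfQ θ (n + 1) * θ) * hrel

theorem cfAlpha_succ_mul_cfErr (hθ : Irrational θ) (n : ℕ) :
    cfAlpha θ (n + 1) * cfErr θ θ (n + 2) = -cfErr θ θ (n + 1) := by
  linear_combination cfAlpha_mul_cfErr_succ_add hθ (n + 1)

theorem neg_one_pow_mul_cfErr_pos (hθ : Irrational θ) (n : ℕ) :
    0 < (-1) ^ n * cfErr θ θ (n + 1) := by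
  induction n with
  | zero => simp [cfErr, cfP, cfQ]
  | succ n ih =>
    have hα := (one_lt_cfAlpha_succ hθ n).trans' one_pos
    have h : cfAlpha θ (n + 1) * ((-1) ^ (n + 1) * cfErr θ θ (n + 2)) =
        (-1) ^ n * cfErr θ θ (n + 1) := by
      linear_combination (-1) ^ (n + 1) * cfAlpha_succ_mul_cfErr hθ n
    exact pos_of_mul_pos_right (h ▸ ih) hα.le

theorem abs_cfErr_succ_lt (hθ : Irrational θ) (n : ℕ) :
    |cfErr θ θ (n + 2)| < |cfErr θ θ (n + 1)| := by
  have hα := one_lt_cfAlpha_succ hθ n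
  have hE : 0 < |cfErr θ θ (n + 2)| := by
    simpa [abs_mul] using abs_pos_of_pos (neg_one_pow_mul_cfErr_pos hθ (n + 1))
  have habs : cfAlpha θ (n + 1) * |cfErr θ θ (n + 2)| = |cfErr θ θ (n + 1)| := by
    rw [← abs_of_pos (hα.trans' one_pos), ← abs_mul, cfAlpha_succ_mul_cfErr hθ, abs_neg]
  nlinarith

theorem abs_cfErr_succ_le_one (hθ : Irrational θ) (n : ℕ) : |cfErr θ θ (n + 1)| ≤ 1 := by
  induction n with
  | zero => simp [cfErr, cfP, cfQ]
  | succ n ih => exact (abs_cfErr_succ_lt hθ n).le.trans ih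

theorem cfErr_succ_pos (hθ : Irrational θ) (hθ1 : 1 ≤ θ) {x : ℝ} (hx : x ≤ 0) (n : ℕ) :
    0 < cfErr θ x (n + 1) := by
  have hp : (1 : ℝ) ≤ cfP θ (n + 1) := by exact_mod_cast one_le_cfP_succ hθ hθ1 n
  have hq : (0 : ℝ) ≤ cfQ θ (n + 1) := by exact_mod_cast (one_le_cfQ_succ_succ hθ n).2
  unfold cfErr
  nlinarith

theorem cfErr_succ_succ_ne_zero (hθ : Irrational θ) (n : ℕ) : cfErr θ θ (n + 2) ≠ 0 := by
  have h := neg_one_pow_mul_cfErr_pos hθ (n + 1)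
  contrapose! h
  simp [h]

theorem cast_cfP_mul_cfQ_sub (n : ℕ) :
    (cfP θ (n + 2) * cfQ θ (n + 1) - cfP θ (n + 1) * cfQ θ (n + 2) : ℝ) = (-1) ^ (n + 1) := by
  exact_mod_cast cfP_succ_mul_cfQ_sub (n + 1)

/-- Comparing `θ` with an arbitrary `x` (for a quadratic irrational, its conjugate). -/
theorem cfAlpha_succ_eq_sub_cfErr_div (hθ : Irrational θ) (x : ℝ) (n : ℕ)
    (hx : cfErr θ x (n + 2) ≠ 0) :
    cfAlpha θ (n + 1) = (-1) ^ (n + 1) * (θ - x) / (cfErr θ θ (n + 2) * cfErr θ x (n + 2))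
      - cfErr θ x (n + 1) / cfErr θ x (n + 2) := by
  have hE := cfErr_succ_succ_ne_zero hθ n
  have hα : cfAlpha θ (n + 1) = -cfErr θ θ (n + 1) / cfErr θ θ (n + 2) := by
    rw [eq_div_iff hE, cfAlpha_succ_mul_cfErr hθ]
  rw [hα]
  field_simp
  unfold cfErr at *
  linear_combination (θ - x) * cast_cfP_mul_cfQ_sub (θ := θ) n

theorem cfErr_div_cfErr_eq (x : ℝ) (n : ℕ) (hq : (cfQ θ (n + 2) : ℝ) ≠ 0)
    (hx : cfErr θ x (n + 2) ≠ 0) :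
    cfErr θ x (n + 1) / cfErr θ x (n + 2) =
      cfQ θ (n + 1) / cfQ θ (n + 2) - (-1) ^ (n + 1) / (cfQ θ (n + 2) * cfErr θ x (n + 2)) := by
  field_simp
  unfold cfErr at *
  linear_combination -cast_cfP_mul_cfQ_sub (θ := θ) n

theorem neg_one_pow_mul_div_cfErr_mul_cfErr (hθ : Irrational θ) (hθ1 : 1 ≤ θ) {x : ℝ}
    (hx : x ≤ 0) (n : ℕ) :
    (-1) ^ (n + 1) * (θ - x) / (cfErr θ θ (n + 2) * cfErr θ x (n + 2)) =
      (θ - x) / |cfErr θ θ (n + 2) * cfErr θ x (n + 2)| := by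
  have hpos := mul_pos (neg_one_pow_mul_cfErr_pos hθ (n + 1)) (cfErr_succ_pos hθ hθ1 hx (n + 1))
  have habs : |cfErr θ θ (n + 2) * cfErr θ x (n + 2)| =
      (-1) ^ (n + 1) * (cfErr θ θ (n + 2) * cfErr θ x (n + 2)) := by
    rw [← mul_assoc, ← abs_of_pos hpos]
    simp [abs_mul]
  rw [habs]
  rcases neg_one_pow_eq_or ℝ (n + 1) with h | h <;> rw [h] <;> ring

theorem cfAlpha_succ_eq_div_abs (hθ : Irrational θ) (hθ1 : 1 ≤ θ) {x : ℝ} (hx : x ≤ 0)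
    (n : ℕ) :
    cfAlpha θ (n + 1) = (θ - x) / |cfErr θ θ (n + 2) * cfErr θ x (n + 2)|
      - cfQ θ (n + 1) / cfQ θ (n + 2) + (-1) ^ (n + 1) / (cfQ θ (n + 2) * cfErr θ x (n + 2)) := by
  have hE := (cfErr_succ_pos hθ hθ1 hx (n + 1)).ne'
  have hq : (cfQ θ (n + 2) : ℝ) ≠ 0 := by
    exact_mod_cast (one_le_cfQ_succ_succ hθ n).1.trans_lt' one_pos |>.ne'
  rw [cfAlpha_succ_eq_sub_cfErr_div hθ x n hE, cfErr_div_cfErr_eq x n hq hE,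
    neg_one_pow_mul_div_cfErr_mul_cfErr hθ hθ1 hx]
  ring

theorem cfAlpha_succ_lt_div_abs (hθ : Irrational θ) (hθ1 : 1 ≤ θ) {x : ℝ} (hx : x ≤ 0)
    (n : ℕ) : cfAlpha θ (n + 1) < (θ - x) / |cfErr θ θ (n + 2) * cfErr θ x (n + 2)| := by
  rw [cfAlpha_succ_eq_sub_cfErr_div hθ x n (cfErr_succ_pos hθ hθ1 hx (n + 1)).ne',
    neg_one_pow_mul_div_cfErr_mul_cfErr hθ hθ1 hx]
  exact sub_lt_self _ (div_pos (cfErr_succ_pos hθ hθ1 hx n) (cfErr_succ_pos hθ hθ1 hx (n + 1)))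

theorem abs_neg_one_pow_div_cfQ_mul_cfErr_lt (hθ : Irrational θ) {x : ℝ} (hx : 2 < θ - x)
    (n : ℕ) :
    |(-1) ^ (n + 1) / (cfQ θ (n + 2) * cfErr θ x (n + 2))| < 4 / ((θ - x) * (cfQ θ (n + 2)) ^ 2) := by
  have hq : (1 : ℝ) ≤ cfQ θ (n + 2) := by exact_mod_cast (one_le_cfQ_succ_succ hθ n).1
  obtain ⟨hE, -⟩ := abs_lt.mp ((abs_cfErr_succ_lt hθ n).trans_le (abs_cfErr_succ_le_one hθ n))
  have hconj : cfErr θ x (n + 2) = cfErr θ θ (n + 2) + cfQ θ (n + 2) * (θ - x) := by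
    unfold cfErr; ring
  have hqx : 2 < cfQ θ (n + 2) * (θ - x) := by nlinarith
  have hpos : 0 < (cfQ θ (n + 2) : ℝ) * cfErr θ x (n + 2) :=
    mul_pos (by linarith) (by rw [hconj]; linarith)
  rw [abs_div, abs_pow, abs_neg, abs_one, one_pow, abs_of_pos hpos,
    div_lt_div_iff₀ hpos (by positivity), hconj]
  nlinarith

end ContinuedFraction

open ContinuedFraction

section Omega

variable {d : ℕ}

theorem two_lt_sqrt_of_not_isSquare (hns : ¬ IsSquare d) (hd4 : d % 4 = 1) : 2 < √(d : ℝ) := by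
  have hd1 : d ≠ 1 := fun h => hns (h ▸ IsSquare.one)
  rw [Real.lt_sqrt zero_le_two]
  exact_mod_cast (show 2 ^ 2 < d by omega)

theorem irrational_omega (hns : ¬ IsSquare d) : Irrational ((1 + √(d : ℝ)) / 2) := by
  have h := ((irrational_sqrt_natCast_iff.mpr hns).intCast_add 1).div_intCast (m := 2) two_ne_zero
  simpa using h

theorem norm_sub_mul_omega (hd4 : d % 4 = 1) (p q : ℤ) :
    (p - q * ((1 + √(d : ℝ)) / 2)) * (p - q * ((1 - √(d : ℝ)) / 2)) =
      ((p ^ 2 - p * q - q ^ 2 * (((d : ℤ) - 1) / 4) : ℤ) : ℝ) := by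
  have hm : (((((d : ℤ) - 1) / 4 : ℤ)) : ℝ) = ((d : ℝ) - 1) / 4 := by
    have : 4 * (((d : ℤ) - 1) / 4) = (d : ℤ) - 1 := by omega
    rw [eq_div_iff four_ne_zero, mul_comm]
    exact_mod_cast this
  push_cast
  rw [hm]
  linear_combination (-(q : ℝ) ^ 2 / 4) * Real.sq_sqrt (Nat.cast_nonneg (α := ℝ) d)

end Omega

theorem stmt_1_general (d : ℕ) (hns : ¬ IsSquare d) (hd4 : d % 4 = 1) (n : ℕ) :
    (∃ δ : ℝ,
        cfAlpha ((1 + Real.sqrt d) / 2) (n + 1) =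
          Real.sqrt d /
              ((|cfP ((1 + Real.sqrt d) / 2) (n + 2) ^ 2
                  - cfP ((1 + Real.sqrt d) / 2) (n + 2) * cfQ ((1 + Real.sqrt d) / 2) (n + 2)
                  - cfQ ((1 + Real.sqrt d) / 2) (n + 2) ^ 2 * (((d : ℤ) - 1) / 4)| : ℤ) : ℝ)
            - (cfQ ((1 + Real.sqrt d) / 2) (n + 1) : ℝ)
              / (cfQ ((1 + Real.sqrt d) / 2) (n + 2) : ℝ) + δ ∧
        |δ| < 4 / (Real.sqrt d * (cfQ ((1 + Real.sqrt d) / 2) (n + 2) : ℝ) ^ 2)) ∧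
    cfAlpha ((1 + Real.sqrt d) / 2) (n + 1) <
      Real.sqrt d /
        ((|cfP ((1 + Real.sqrt d) / 2) (n + 2) ^ 2
            - cfP ((1 + Real.sqrt d) / 2) (n + 2) * cfQ ((1 + Real.sqrt d) / 2) (n + 2)
            - cfQ ((1 + Real.sqrt d) / 2) (n + 2) ^ 2 * (((d : ℤ) - 1) / 4)| : ℤ) : ℝ) := by
  have hω := irrational_omega hns
  have hs := two_lt_sqrt_of_not_isSquare hns hd4
  have hω1 : 1 ≤ (1 + √(d : ℝ)) / 2 := by linarith
  have hconj : (1 - √(d : ℝ)) / 2 ≤ 0 := by linarith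
  have hsub : (1 + √(d : ℝ)) / 2 - (1 - √(d : ℝ)) / 2 = √(d : ℝ) := by ring
  have hν := congrArg abs (norm_sub_mul_omega hd4
    (cfP ((1 + √(d : ℝ)) / 2) (n + 2)) (cfQ ((1 + √(d : ℝ)) / 2) (n + 2)))
  rw [← Int.cast_abs] at hν
  have hα := cfAlpha_succ_eq_div_abs hω hω1 hconj n
  have hδ := abs_neg_one_pow_div_cfQ_mul_cfErr_lt hω (hsub ▸ hs) n
  have hlt := cfAlpha_succ_lt_div_abs hω hω1 hconj n
  simp only [cfErr, hsub, hν] at hα hδ hlt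
  exact ⟨⟨_, hα, hδ⟩, hlt⟩

/-- for a positive non-square integer `d ≡ 1 (mod 4)` and `ω_d = (1+√d)/2`,
with `ν_n = |p_n² - p_n q_n - q_n² (d-1)/4|`, for every `n ≥ 0` there is `δ_n` with
`α_{n+1} = √d/ν_n - q_{n-1}/q_n + δ_n`, `|δ_n| < 4/(√d q_n²)`;
in particular `α_{n+1} < √d/ν_n`. -/
theorem stmt_1 (d : ℕ) (hd : 0 < d) (hns : ¬ IsSquare d) (hd4 : d % 4 = 1) (n : ℕ) :
    (∃ δ : ℝ,
        cfAlpha ((1 + Real.sqrt d) / 2) (n + 1) =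
          Real.sqrt d /
              ((|cfP ((1 + Real.sqrt d) / 2) (n + 2) ^ 2
                  - cfP ((1 + Real.sqrt d) / 2) (n + 2) * cfQ ((1 + Real.sqrt d) / 2) (n + 2)
                  - cfQ ((1 + Real.sqrt d) / 2) (n + 2) ^ 2 * (((d : ℤ) - 1) / 4)| : ℤ) : ℝ)
            - (cfQ ((1 + Real.sqrt d) / 2) (n + 1) : ℝ)
              / (cfQ ((1 + Real.sqrt d) / 2) (n + 2) : ℝ) + δ ∧
        |δ| < 4 / (Real.sqrt d * (cfQ ((1 + Real.sqrt d) / 2) (n + 2) : ℝ) ^ 2)) ∧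
    cfAlpha ((1 + Real.sqrt d) / 2) (n + 1) <
      Real.sqrt d /
        ((|cfP ((1 + Real.sqrt d) / 2) (n + 2) ^ 2
            - cfP ((1 + Real.sqrt d) / 2) (n + 2) * cfQ ((1 + Real.sqrt d) / 2) (n + 2)
            - cfQ ((1 + Real.sqrt d) / 2) (n + 2) ^ 2 * (((d : ℤ) - 1) / 4)| : ℤ) : ℝ) :=
  stmt_1_general d hns hd4 n
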